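/- arXiv:2310.01196 — 2 statements merged into one kernel-verified Lean document; each statement's English description precedes it below -/
import Mathlib

section
/- The function μ(η̄) = (η̄ - η̄_T)(arctan(100(η̄ - η̄_T))/π + 1/2) - arctan(100)/π + 1/2 is nonnegative for all real η̄ whenever 0 ≤ η̄_T ≤ 1 and η̄ ≥ 0. -/
/-! Put `t = x - η̄_T ≥ -1`. For `t ≥ 0` every term is nonnegative since `arctan 100 < π/2`.
For `t = -s < 0`, the identity `π/2 - arctan y = arctan y⁻¹` turns `π μ` into
`arctan (1/100) - s · arctan (1/(100 s))`, which is nonnegative for `s ≤ 1` because `arctan`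
is concave on `[0, ∞)` and vanishes at `0`. -/

open Real Set

namespace Real

theorem concaveOn_arctan_Ici : ConcaveOn ℝ (Ici 0) arctan := by
  refine AntitoneOn.concaveOn_of_deriv (convex_Ici 0) continuous_arctan.continuousOn
    differentiable_arctan.differentiableOn ?_
  rw [interior_Ici, deriv_arctan]
  intro x hx _ _ hxy
  have hx : 0 ≤ x := le_of_lt hx
  dsimp only
  gcongr

theorem mul_arctan_le_arctan_mul {s u : ℝ} (hs₀ : 0 ≤ s) (hs₁ : s ≤ 1) (hu : 0 ≤ u) :
    s * arctan u ≤ arctan (s * u) := by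
  simpa using concaveOn_arctan_Ici.2 hu self_mem_Ici hs₀ (sub_nonneg.2 hs₁) (add_sub_cancel s 1)

/-- `π μ` written with `t = x - η̄_T` and a general slope `a` in place of `100`; it vanishes at
`t = -1`. -/
theorem arctan_ramp_nonneg {a t : ℝ} (ha : 0 < a) (ht : -1 ≤ t) :
    0 ≤ t * (arctan (a * t) + π / 2) + (π / 2 - arctan a) := by
  have hgap : 0 ≤ π / 2 - arctan a := sub_nonneg.2 (arctan_lt_pi_div_two a).le
  rcases le_or_gt 0 t with ht₀ | ht₀
  · have : 0 ≤ arctan (a * t) + π / 2 := by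
      have := neg_pi_div_two_lt_arctan (a * t)
      linarith
    positivity
  · obtain ⟨s, hs₀, hs₁, rfl⟩ : ∃ s, 0 < s ∧ s ≤ 1 ∧ t = -s := ⟨-t, by linarith, by linarith, by ring⟩
    have hshift : arctan (a * -s) + π / 2 = arctan (a * s)⁻¹ := by
      rw [arctan_inv_of_pos (by positivity), mul_neg, arctan_neg]
      ring
    have hscale : s * (a * s)⁻¹ = a⁻¹ := by field_simp
    have := mul_arctan_le_arctan_mul hs₀.le hs₁ (inv_nonneg.2 (mul_pos ha hs₀).le)
    rw [hscale, arctan_inv_of_pos ha] at this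
    rw [hshift]
    linarith

end Real

theorem mu_nonneg_general (etaT : ℝ) (hT1 : etaT ≤ 1)
    (x : ℝ) (hx : 0 ≤ x) :
    0 ≤ (x - etaT) * (Real.arctan (100 * (x - etaT)) / Real.pi + 1 / 2)
        - Real.arctan 100 / Real.pi + 1 / 2 := by
  have hramp := arctan_ramp_nonneg (a := 100) (t := x - etaT) (by norm_num) (by linarith)
  have hμ : (x - etaT) * (arctan (100 * (x - etaT)) / π + 1 / 2) - arctan 100 / π + 1 / 2
      = ((x - etaT) * (arctan (100 * (x - etaT)) + π / 2) + (π / 2 - arctan 100)) / π := by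
    field_simp
    ring
  rw [hμ]
  exact div_nonneg hramp pi_pos.le

theorem mu_nonneg (etaT : ℝ) (hT0 : 0 ≤ etaT) (hT1 : etaT ≤ 1)
    (x : ℝ) (hx : 0 ≤ x) :
    0 ≤ (x - etaT) * (Real.arctan (100 * (x - etaT)) / Real.pi + 1 / 2)
        - Real.arctan 100 / Real.pi + 1 / 2 :=
  mu_nonneg_general etaT hT1 x hx
end

section
/- For any c ∈ ℝ and k > 0, the function f(x) = (x - c)(arctan(k(x - c))/π + 1/2) satisfies max(x - c, 0) - 1/(kπ) ≤ f(x) ≤ max(x - c, 0) + 1/(kπ) for all x, i.e., f approximates the ramp function max(x - c, 0) with error at most 1/(kπ). -/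
open Real

lemma arctan_lt_self' {y : ℝ} (hy : 0 < y) : Real.arctan y < y := by
  have ha : 0 < Real.arctan y := by
    have := Real.arctan_strictMono hy
    rwa [Real.arctan_zero] at this
  have := Real.lt_tan ha (Real.arctan_lt_pi_div_two y)
  rwa [Real.tan_arctan] at this

lemma half_pi_sub_arctan_le {s : ℝ} (hs : 0 < s) :
    Real.pi / 2 - Real.arctan s ≤ 1 / s := by
  have h := Real.arctan_inv_of_pos hs
  have h2 : Real.arctan s⁻¹ < s⁻¹ := arctan_lt_self' (by positivity)
  rw [h] at h2
  rw [one_div]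
  linarith

theorem ramp_approx (c k : ℝ) (hk : 0 < k) (x : ℝ) :
    max (x - c) 0 - 1 / (k * Real.pi)
      ≤ (x - c) * (Real.arctan (k * (x - c)) / Real.pi + 1 / 2) ∧
    (x - c) * (Real.arctan (k * (x - c)) / Real.pi + 1 / 2)
      ≤ max (x - c) 0 + 1 / (k * Real.pi) := by
  set t := x - c with ht
  set a := Real.arctan (k * t) with ha
  have hpi : 0 < Real.pi := Real.pi_pos
  have hub : a < Real.pi / 2 := Real.arctan_lt_pi_div_two (k * t)
  have hlb : -(Real.pi / 2) < a := Real.neg_pi_div_two_lt_arctan (k * t)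
  have hkpi : 0 < 1 / (k * Real.pi) := by positivity
  rcases lt_trichotomy t 0 with htn | hte | htp
  · rw [max_eq_right htn.le]
    have hs : 0 < k * (-t) := mul_pos hk (by linarith)
    have key := half_pi_sub_arctan_le hs
    have harc : Real.arctan (k * -t) = -a := by
      rw [ha, show k * -t = -(k * t) by ring, Real.arctan_neg]
    rw [harc] at key
    have h1 : (Real.pi / 2 + a) * (k * -t) ≤ 1 := by
      have := mul_le_mul_of_nonneg_right key hs.le
      rw [div_mul_cancel₀ 1 hs.ne'] at this
      linarith
    have hfac : 0 ≤ a / Real.pi + 1 / 2 := by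
      have : -(1/2 : ℝ) ≤ a / Real.pi := by
        rw [le_div_iff₀ hpi]; linarith
      linarith
    constructor
    · rw [← sub_nonneg]
      have expand : t * (a / Real.pi + 1 / 2) - (0 - 1 / (k * Real.pi))
          = (1 - (Real.pi / 2 + a) * (k * -t)) / (k * Real.pi) := by
        field_simp; ring
      rw [expand]
      exact div_nonneg (by linarith) (by positivity)
    · nlinarith
  · simp [hte]
    positivity
  · rw [max_eq_left htp.le]
    have hs : 0 < k * t := by positivity
    have key := half_pi_sub_arctan_le hs
    have h1 : (Real.pi / 2 - a) * (k * t) ≤ 1 := by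
      have := mul_le_mul_of_nonneg_right key hs.le
      rw [div_mul_cancel₀ 1 hs.ne'] at this
      linarith
    constructor
    · rw [← sub_nonneg]
      have expand : t * (a / Real.pi + 1 / 2) - (t - 1 / (k * Real.pi))
          = (1 - (Real.pi / 2 - a) * (k * t)) / (k * Real.pi) := by
        field_simp; ring
      rw [expand]
      exact div_nonneg (by linarith) (by positivity)
    · have hfac : a / Real.pi + 1 / 2 ≤ 1 := by
        have : a / Real.pi ≤ 1/2 := by rw [div_le_iff₀ hpi]; linarith
        linarith
      nlinarith
end
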